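/- The image of the vector (0, ..., 0, -1) in the cokernel of the s×s matrix M (with M_{1,1} = -2, M_{i,1} = -1 for i ≥ 2, M_{i,i+1} = 1, M_{i,i} = -1 for i ≥ 2, other entries 0) generates the cokernel. -/
import Mathlib


/-- The image of the vector `(0, ..., 0, -1)` generates the cokernel of the matrix
`M = C_{A_s} - Id`. -/
theorem stmt_3 (s : ℕ) (hs : 1 ≤ s) (M : Matrix (Fin s) (Fin s) ℤ)
    (hM : ∀ i j : Fin s, M i j =
      if (i : ℕ) = 0 ∧ (j : ℕ) = 0 then -2
      else if (j : ℕ) = 0 then -1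
      else if (j : ℕ) = (i : ℕ) + 1 then 1
      else if i = j then -1
      else 0) :
    AddSubgroup.closure
      {Submodule.Quotient.mk (p := LinearMap.range M.mulVecLin)
        (fun i : Fin s => if (i : ℕ) = s - 1 then (-1 : ℤ) else 0)} = ⊤ := by
  set p := LinearMap.range M.mulVecLin with hp
  set last : Fin s := ⟨s - 1, by omega⟩ with hlast
  have hgen : (fun i : Fin s => if (i : ℕ) = s - 1 then (-1 : ℤ) else 0)
      = -Pi.single last (1 : ℤ) := by
    funext i
    simp only [Pi.neg_apply, Pi.single_apply]
    by_cases h : i = last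
    · subst h; simp [hlast]
    · rw [if_neg h, if_neg, neg_zero]
      intro hc; exact h (Fin.ext (by simpa [hlast] using hc))
  -- columns give e_{j-1} - e_j in range
  have hcol : ∀ j : Fin s, (j : ℕ) ≠ 0 →
      Pi.single (⟨(j : ℕ) - 1, by omega⟩ : Fin s) (1 : ℤ) - Pi.single j 1 ∈ p := by
    intro j hj
    refine ⟨Pi.single j 1, ?_⟩
    funext i
    simp only [Matrix.mulVecLin_apply, Matrix.mulVec, dotProduct]
    rw [Finset.sum_eq_single j]
    · simp only [Pi.single_eq_same, mul_one, hM i j, Pi.sub_apply, Pi.single_apply]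
      rw [if_neg (by intro ⟨_, h⟩; exact hj h), if_neg hj]
      by_cases h1 : (j : ℕ) = (i : ℕ) + 1
      · rw [if_pos h1, if_pos, if_neg, sub_zero]
        · intro hc; omega
        · exact Fin.ext (by simp; omega)
      · rw [if_neg h1]
        by_cases h2 : i = j
        · rw [if_pos h2, if_pos h2, if_neg, zero_sub]
          intro hc
          have := Fin.mk.inj_iff.mp hc
          omega
        · rw [if_neg h2, if_neg h2, if_neg, sub_zero]
          intro hc
          have := Fin.mk.inj_iff.mp hc
          exact h1 (by omega)
    · intro b _ hb
      simp [Pi.single_apply, hb.symm]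
    · simp
  have key : ∀ i : Fin s,
      (Submodule.Quotient.mk (p := p) (Pi.single i (1 : ℤ)))
        = Submodule.Quotient.mk (p := p) (Pi.single last 1) := by
    intro i
    obtain ⟨iv, hiv⟩ := i
    have : ∀ k : ℕ, ∀ h : s - 1 - k < s,
        (Submodule.Quotient.mk (p := p) (Pi.single (⟨s - 1 - k, h⟩ : Fin s) (1 : ℤ)))
          = Submodule.Quotient.mk (p := p) (Pi.single last 1) := by
      intro k
      induction k with
      | zero => intro h; rw [show (⟨s - 1 - 0, h⟩ : Fin s) = last from Fin.ext (by simp [hlast])]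
      | succ n ih =>
        intro h
        by_cases hn : s - 1 - n = s - 1 - (n + 1)
        · rw [show (⟨s - 1 - (n+1), h⟩ : Fin s) = ⟨s - 1 - n, by omega⟩ from Fin.ext (by simp; omega)]
          exact ih (by omega)
        · have h1 : s - 1 - n ≠ 0 := by omega
          have := hcol ⟨s - 1 - n, by omega⟩ h1
          have heq : (Submodule.Quotient.mk (p := p)
              (Pi.single (⟨s - 1 - (n+1), h⟩ : Fin s) (1 : ℤ)))
              = Submodule.Quotient.mk (p := p) (Pi.single (⟨s - 1 - n, by omega⟩ : Fin s) 1) := by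
            rw [Submodule.Quotient.eq]
            exact this
          rw [heq]; exact ih (by omega)
    have h2 : iv = s - 1 - (s - 1 - iv) := by omega
    calc (Submodule.Quotient.mk (p := p) (Pi.single (⟨iv, hiv⟩ : Fin s) (1 : ℤ)))
        = Submodule.Quotient.mk (p := p)
            (Pi.single (⟨s - 1 - (s - 1 - iv), by omega⟩ : Fin s) (1 : ℤ)) := by
            rw [show (⟨iv, hiv⟩ : Fin s) = (⟨s - 1 - (s - 1 - iv), by omega⟩ : Fin s) from Fin.ext (by simp; omega)]
      _ = _ := this _ _
  rw [AddSubgroup.eq_top_iff']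
  intro x
  obtain ⟨v, rfl⟩ := Submodule.Quotient.mk_surjective p x
  have hv : v = ∑ i : Fin s, v i • Pi.single i (1 : ℤ) := by
    funext j
    simp [Pi.single_apply, Finset.sum_ite_eq']
  rw [hv]
  have : (Submodule.Quotient.mk (p := p) (∑ i : Fin s, v i • Pi.single i (1 : ℤ)))
      = (∑ i : Fin s, v i) • Submodule.Quotient.mk (p := p) (Pi.single last (1 : ℤ)) := by
    rw [← Submodule.mkQ_apply, map_sum]
    simp only [map_smul, Submodule.mkQ_apply, key]
    rw [← Finset.sum_smul]
  rw [this]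
  have hg : Submodule.Quotient.mk (p := p) (Pi.single last (1 : ℤ))
      = -(Submodule.Quotient.mk (p := p)
          (fun i : Fin s => if (i : ℕ) = s - 1 then (-1 : ℤ) else 0)) := by
    rw [hgen, ← Submodule.mkQ_apply, ← Submodule.mkQ_apply, map_neg, neg_neg]
  rw [hg]
  refine AddSubgroup.zsmul_mem _ (AddSubgroup.neg_mem _ ?_) _
  exact AddSubgroup.subset_closure rfl
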